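/- arXiv:2007.12015 — 5 statements merged into one kernel-verified Lean document; each statement's English description precedes it below -/
import Mathlib

section
/- (Live variables, Progress) For every program P and live-variables analysis result β_before, β_after: if ⟨l,σ⟩ → ⟨l',σ'⟩ in the standard semantics, then ⟨l, σ, β_before(l)⟩ ⇒ ⟨l', σ', β_before(l')⟩ in the live-variables augmented semantics. -/
namespace Dataflow

/-- Arithmetic expressions: integer constants, variables, +, −, ×. -/
inductive AExp (V : Type*) where
  | num : ℤ → AExp V
  | var : V → AExp V
  | add : AExp V → AExp V → AExp V
  | sub : AExp V → AExp V → AExp V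
  | mul : AExp V → AExp V → AExp V

/-- Boolean expressions. -/
inductive BExp (V : Type*) where
  | tt : BExp V
  | ff : BExp V
  | eq : AExp V → AExp V → BExp V
  | le : AExp V → AExp V → BExp V
  | not : BExp V → BExp V
  | and : BExp V → BExp V → BExp V
  | or : BExp V → BExp V → BExp V

/-- Commands: skip, v := e, if b then g, goto g, halt, done. -/
inductive Cmd (V L : Type*) where
  | skip : Cmd V L
  | assign : V → AExp V → Cmd V L
  | ifgoto : BExp V → L → Cmd V L
  | goto : L → Cmd V L
  | halt : Cmd V L
  | done : Cmd V L

variable {V L : Type*}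

def AExp.vars : AExp V → Set V
  | .num _ => ∅
  | .var v => {v}
  | .add e₁ e₂ => e₁.vars ∪ e₂.vars
  | .sub e₁ e₂ => e₁.vars ∪ e₂.vars
  | .mul e₁ e₂ => e₁.vars ∪ e₂.vars

def BExp.vars : BExp V → Set V
  | .tt => ∅
  | .ff => ∅
  | .eq e₁ e₂ => e₁.vars ∪ e₂.vars
  | .le e₁ e₂ => e₁.vars ∪ e₂.vars
  | .not b => b.vars
  | .and b₁ b₂ => b₁.vars ∪ b₂.vars
  | .or b₁ b₂ => b₁.vars ∪ b₂.vars

def Cmd.vars : Cmd V L → Set V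
  | .assign _ e => e.vars
  | .ifgoto b _ => b.vars
  | _ => ∅

/-- The set of arithmetic subexpressions of an arithmetic expression. -/
def AExp.subexp : AExp V → Set (AExp V)
  | .num n => {AExp.num n}
  | .var v => {AExp.var v}
  | .add e₁ e₂ => insert (AExp.add e₁ e₂) (e₁.subexp ∪ e₂.subexp)
  | .sub e₁ e₂ => insert (AExp.sub e₁ e₂) (e₁.subexp ∪ e₂.subexp)
  | .mul e₁ e₂ => insert (AExp.mul e₁ e₂) (e₁.subexp ∪ e₂.subexp)

/-- The set of arithmetic subexpressions of a boolean expression. -/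
def BExp.subexp : BExp V → Set (AExp V)
  | .tt => ∅
  | .ff => ∅
  | .eq e₁ e₂ => e₁.subexp ∪ e₂.subexp
  | .le e₁ e₂ => e₁.subexp ∪ e₂.subexp
  | .not b => b.subexp
  | .and b₁ b₂ => b₁.subexp ∪ b₂.subexp
  | .or b₁ b₂ => b₁.subexp ∪ b₂.subexp

/-- The set of arithmetic subexpressions of a command. -/
def Cmd.subexp : Cmd V L → Set (AExp V)
  | .assign _ e => e.subexp
  | .ifgoto b _ => b.subexp
  | _ => ∅

/-- Program states: partial maps from variables to integers. -/
abbrev State (V : Type*) := V → Option ℤ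

/-- The domain of a state: the variables on which it is defined. -/
def dom (σ : State V) : Set V := {v | σ v ≠ none}

/-- A program: a finite set of labeled commands with distinct labels (modeled as a
partial map from labels to commands with finite domain), equipped with a `next`
function on labels, a first label, and satisfying: if `l : halt ∈ P` then
`next l : done ∈ P`.  `P.cmds l = some c` formalizes `l : c ∈ P`. -/
structure Program (V L : Type*) where
  cmds : L → Option (Cmd V L)
  next : L → L
  first : L
  finite : {l | cmds l ≠ none}.Finite
  halt_done : ∀ l, cmds l = some Cmd.halt → cmds (next l) = some Cmd.done

/-- Standard big-step evaluation of arithmetic expressions. -/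
inductive AEval (σ : State V) : AExp V → ℤ → Prop where
  | num : ∀ n, AEval σ (.num n) n
  | var : ∀ v n, σ v = some n → AEval σ (.var v) n
  | add : ∀ e₁ e₂ n₁ n₂, AEval σ e₁ n₁ → AEval σ e₂ n₂ → AEval σ (.add e₁ e₂) (n₁ + n₂)
  | sub : ∀ e₁ e₂ n₁ n₂, AEval σ e₁ n₁ → AEval σ e₂ n₂ → AEval σ (.sub e₁ e₂) (n₁ - n₂)
  | mul : ∀ e₁ e₂ n₁ n₂, AEval σ e₁ n₁ → AEval σ e₂ n₂ → AEval σ (.mul e₁ e₂) (n₁ * n₂)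

/-- Standard big-step evaluation of boolean expressions. -/
inductive BEval (σ : State V) : BExp V → Bool → Prop where
  | tt : BEval σ .tt true
  | ff : BEval σ .ff false
  | eq : ∀ e₁ e₂ n₁ n₂, AEval σ e₁ n₁ → AEval σ e₂ n₂ → BEval σ (.eq e₁ e₂) (decide (n₁ = n₂))
  | le : ∀ e₁ e₂ n₁ n₂, AEval σ e₁ n₁ → AEval σ e₂ n₂ → BEval σ (.le e₁ e₂) (decide (n₁ ≤ n₂))
  | not : ∀ b t, BEval σ b t → BEval σ (.not b) (!t)
  | and : ∀ b₁ b₂ t₁ t₂, BEval σ b₁ t₁ → BEval σ b₂ t₂ → BEval σ (.and b₁ b₂) (t₁ && t₂)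
  | or : ∀ b₁ b₂ t₁ t₂, BEval σ b₁ t₁ → BEval σ b₂ t₂ → BEval σ (.or b₁ b₂) (t₁ || t₂)

variable [DecidableEq V]

/-- The standard small-step operational semantics `⟨l,σ⟩ → ⟨l',σ'⟩`. -/
inductive Step (P : Program V L) : L → State V → L → State V → Prop where
  | assign : ∀ l σ v e n, P.cmds l = some (.assign v e) → AEval σ e n →
      Step P l σ (P.next l) (Function.update σ v (some n))
  | ifTrue : ∀ l σ b g, P.cmds l = some (.ifgoto b g) → BEval σ b true →
      Step P l σ g σ
  | ifFalse : ∀ l σ b g, P.cmds l = some (.ifgoto b g) → BEval σ b false →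
      Step P l σ (P.next l) σ
  | goto : ∀ l σ g, P.cmds l = some (.goto g) → Step P l σ g σ
  | skip : ∀ l σ, P.cmds l = some .skip → Step P l σ (P.next l) σ
  | halt : ∀ l σ, P.cmds l = some .halt → Step P l σ (P.next l) σ

/-- The successors of a label. -/
def Program.succs (P : Program V L) (l : L) : Set L :=
  match P.cmds l with
  | some (Cmd.assign _ _) => {P.next l}
  | some Cmd.skip => {P.next l}
  | some Cmd.halt => {P.next l}
  | some (Cmd.goto g) => {g}
  | some (Cmd.ifgoto _ g) => {P.next l, g}
  | _ => ∅

/-- The predecessors of a label. -/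
def Program.preds (P : Program V L) (l : L) : Set L := {g | l ∈ P.succs g}

/-! ### Live variables -/

/-- Live-variables augmented evaluation of arithmetic expressions: every variable
read must be predicted live (`v ∈ π`). -/
inductive AEvalLV (σ : State V) (π : Set V) : AExp V → ℤ → Prop where
  | num : ∀ n, AEvalLV σ π (.num n) n
  | var : ∀ v n, σ v = some n → v ∈ π → AEvalLV σ π (.var v) n
  | add : ∀ e₁ e₂ n₁ n₂, AEvalLV σ π e₁ n₁ → AEvalLV σ π e₂ n₂ → AEvalLV σ π (.add e₁ e₂) (n₁ + n₂)
  | sub : ∀ e₁ e₂ n₁ n₂, AEvalLV σ π e₁ n₁ → AEvalLV σ π e₂ n₂ → AEvalLV σ π (.sub e₁ e₂) (n₁ - n₂)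
  | mul : ∀ e₁ e₂ n₁ n₂, AEvalLV σ π e₁ n₁ → AEvalLV σ π e₂ n₂ → AEvalLV σ π (.mul e₁ e₂) (n₁ * n₂)

/-- Live-variables augmented evaluation of boolean expressions. -/
inductive BEvalLV (σ : State V) (π : Set V) : BExp V → Bool → Prop where
  | tt : BEvalLV σ π .tt true
  | ff : BEvalLV σ π .ff false
  | eq : ∀ e₁ e₂ n₁ n₂, AEvalLV σ π e₁ n₁ → AEvalLV σ π e₂ n₂ → BEvalLV σ π (.eq e₁ e₂) (decide (n₁ = n₂))
  | le : ∀ e₁ e₂ n₁ n₂, AEvalLV σ π e₁ n₁ → AEvalLV σ π e₂ n₂ → BEvalLV σ π (.le e₁ e₂) (decide (n₁ ≤ n₂))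
  | not : ∀ b t, BEvalLV σ π b t → BEvalLV σ π (.not b) (!t)
  | and : ∀ b₁ b₂ t₁ t₂, BEvalLV σ π b₁ t₁ → BEvalLV σ π b₂ t₂ → BEvalLV σ π (.and b₁ b₂) (t₁ && t₂)
  | or : ∀ b₁ b₂ t₁ t₂, BEvalLV σ π b₁ t₁ → BEvalLV σ π b₂ t₂ → BEvalLV σ π (.or b₁ b₂) (t₁ || t₂)

/-- The live-variables augmented small-step semantics `⟨l,σ,π⟩ ⇒ ⟨l',σ',π'⟩`:
for `l : v := e` any `π' ⊆ π ∪ {v}`; for `l : if b then g` any `π' ⊆ π`;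
for goto, skip, halt, `π' = π`. -/
inductive LVStep (P : Program V L) : L → State V → Set V → L → State V → Set V → Prop where
  | assign : ∀ l σ π v e n π', P.cmds l = some (.assign v e) → AEvalLV σ π e n →
      π' ⊆ π ∪ {v} →
      LVStep P l σ π (P.next l) (Function.update σ v (some n)) π'
  | ifTrue : ∀ l σ π b g π', P.cmds l = some (.ifgoto b g) → BEvalLV σ π b true →
      π' ⊆ π → LVStep P l σ π g σ π'
  | ifFalse : ∀ l σ π b g π', P.cmds l = some (.ifgoto b g) → BEvalLV σ π b false →
      π' ⊆ π → LVStep P l σ π (P.next l) σ π'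
  | goto : ∀ l σ π g, P.cmds l = some (.goto g) → LVStep P l σ π g σ π
  | skip : ∀ l σ π, P.cmds l = some .skip → LVStep P l σ π (P.next l) σ π
  | halt : ∀ l σ π, P.cmds l = some .halt → LVStep P l σ π (P.next l) σ π

/-- The live-variables transfer function. -/
def lvTransfer (c : Cmd V L) (β : Set V) : Set V :=
  match c with
  | .assign v e => (β \ {v}) ∪ e.vars
  | .ifgoto b _ => β ∪ b.vars
  | _ => β

/-- A live-variables analysis result: a solution of the backward dataflow equations. -/
structure LVAnalysis (P : Program V L) where
  before : L → Set V
  after : L → Set V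
  halt_after : ∀ l, P.cmds l = some Cmd.halt → after l = ∅
  after_eq : ∀ l c, P.cmds l = some c → c ≠ Cmd.done →
      after l = ⋃ g ∈ P.succs l, before g
  before_eq : ∀ l c, P.cmds l = some c → before l = lvTransfer c (after l)
/-! ### Very busy expressions -/

/-- The very-busy-expressions augmented small-step semantics `⟨l,σ,π⟩ ⇒ ⟨l',σ',π'⟩`. -/
inductive VBEStep (P : Program V L) :
    L → State V → Set (AExp V) → L → State V → Set (AExp V) → Prop where
  | assign : ∀ l σ π v e n π', P.cmds l = some (.assign v e) → AEval σ e n →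
      (∀ e' ∈ π, e' ∈ AExp.subexp e ∨ v ∉ AExp.vars e') →
      π \ AExp.subexp e ⊆ π' →
      VBEStep P l σ π (P.next l) (Function.update σ v (some n)) π'
  | ifTrue : ∀ l σ π b g π', P.cmds l = some (.ifgoto b g) → BEval σ b true →
      π \ BExp.subexp b ⊆ π' → VBEStep P l σ π g σ π'
  | ifFalse : ∀ l σ π b g π', P.cmds l = some (.ifgoto b g) → BEval σ b false →
      π \ BExp.subexp b ⊆ π' → VBEStep P l σ π (P.next l) σ π'
  | goto : ∀ l σ π g, P.cmds l = some (.goto g) → VBEStep P l σ π g σ π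
  | skip : ∀ l σ π, P.cmds l = some .skip → VBEStep P l σ π (P.next l) σ π
  | halt : ∀ l σ π, P.cmds l = some .halt → π = ∅ → VBEStep P l σ π (P.next l) σ π

/-- The very-busy-expressions transfer function. -/
def vbeTransfer (c : Cmd V L) (β : Set (AExp V)) : Set (AExp V) :=
  match c with
  | .assign v e => (β \ {e' ∈ β | v ∈ AExp.vars e'}) ∪ AExp.subexp e
  | .ifgoto b _ => β ∪ BExp.subexp b
  | _ => β

/-- A very-busy-expressions analysis result: a solution of the backward dataflow
equations. -/
structure VBEAnalysis (P : Program V L) where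
  before : L → Set (AExp V)
  after : L → Set (AExp V)
  done_after : ∀ l, P.cmds l = some Cmd.done → after l = ∅
  after_eq : ∀ l c, P.cmds l = some c → c ≠ Cmd.done →
      after l = ⋂ g ∈ P.succs l, before g
  before_eq : ∀ l c, P.cmds l = some c → before l = vbeTransfer c (after l)
/-! ### Defined variables -/

/-- The defined-variables augmented small-step semantics `⟨l,σ,π⟩ ⇒ ⟨l',σ',π'⟩`
(incorporating the upward-closure metarule in the lattice of sets of variables
ordered by reverse inclusion): for `l : v := e` any `π' ⊆ π ∪ {v}`; for all
other commands any `π' ⊆ π`. -/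
inductive DVStep (P : Program V L) : L → State V → Set V → L → State V → Set V → Prop where
  | assign : ∀ l σ π v e n π', P.cmds l = some (.assign v e) → AEval σ e n →
      π' ⊆ π ∪ {v} →
      DVStep P l σ π (P.next l) (Function.update σ v (some n)) π'
  | ifTrue : ∀ l σ π b g π', P.cmds l = some (.ifgoto b g) → BEval σ b true →
      π' ⊆ π → DVStep P l σ π g σ π'
  | ifFalse : ∀ l σ π b g π', P.cmds l = some (.ifgoto b g) → BEval σ b false →
      π' ⊆ π → DVStep P l σ π (P.next l) σ π'
  | goto : ∀ l σ π g π', P.cmds l = some (.goto g) → π' ⊆ π → DVStep P l σ π g σ π'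
  | skip : ∀ l σ π π', P.cmds l = some .skip → π' ⊆ π → DVStep P l σ π (P.next l) σ π'
  | halt : ∀ l σ π π', P.cmds l = some .halt → π' ⊆ π → DVStep P l σ π (P.next l) σ π'

/-- The defined-variables transfer function. -/
def dvTransfer (c : Cmd V L) (β : Set V) : Set V :=
  match c with
  | .assign v _ => β ∪ {v}
  | _ => β

/-- A defined-variables analysis result: a solution of the forward dataflow equations. -/
structure DVAnalysis (P : Program V L) where
  before : L → Set V
  after : L → Set V
  first_before : before P.first = ∅
  before_eq : ∀ l c, P.cmds l = some c → l ≠ P.first →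
      before l = ⋂ g ∈ P.preds l, after g
  after_eq : ∀ l c, P.cmds l = some c → after l = dvTransfer c (before l)
/-! ### Reaching definitions -/

/-- The reaching-definitions transfer function. -/
def rdTransfer (l : L) (c : Cmd V L) (β : V → Set L) : V → Set L :=
  match c with
  | .assign v _ => Function.update β v {l}
  | _ => β

/-- A reaching-definitions analysis result: a solution of the forward dataflow
equations over the lattice of functions `V → Set L` with the pointwise subset
order. -/
structure RDAnalysis (P : Program V L) where
  before : L → V → Set L
  after : L → V → Set L
  first_before : before P.first = fun _ => ∅
  before_eq : ∀ l c, P.cmds l = some c → l ≠ P.first →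
      before l = fun w => ⋃ g ∈ P.preds l, after g w
  after_eq : ∀ l c, P.cmds l = some c → after l = rdTransfer l c (before l)
theorem AEvalLV_of_AEval {σ : State V} {π : Set V} {e : AExp V} {n : ℤ}
    (h : AEval σ e n) (hv : e.vars ⊆ π) : AEvalLV σ π e n := by
  induction h with
  | num n => exact .num n
  | var v n hσ => exact .var v n hσ (hv rfl)
  | add e₁ e₂ n₁ n₂ _ _ ih₁ ih₂ =>
      exact .add _ _ _ _ (ih₁ fun _ h => hv (Or.inl h)) (ih₂ fun _ h => hv (Or.inr h))
  | sub e₁ e₂ n₁ n₂ _ _ ih₁ ih₂ =>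
      exact .sub _ _ _ _ (ih₁ fun _ h => hv (Or.inl h)) (ih₂ fun _ h => hv (Or.inr h))
  | mul e₁ e₂ n₁ n₂ _ _ ih₁ ih₂ =>
      exact .mul _ _ _ _ (ih₁ fun _ h => hv (Or.inl h)) (ih₂ fun _ h => hv (Or.inr h))

theorem BEvalLV_of_BEval {σ : State V} {π : Set V} {b : BExp V} {t : Bool}
    (h : BEval σ b t) (hv : b.vars ⊆ π) : BEvalLV σ π b t := by
  induction h with
  | tt => exact .tt
  | ff => exact .ff
  | eq e₁ e₂ n₁ n₂ h₁ h₂ =>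
      exact .eq _ _ _ _ (AEvalLV_of_AEval h₁ fun _ h => hv (Or.inl h))
        (AEvalLV_of_AEval h₂ fun _ h => hv (Or.inr h))
  | le e₁ e₂ n₁ n₂ h₁ h₂ =>
      exact .le _ _ _ _ (AEvalLV_of_AEval h₁ fun _ h => hv (Or.inl h))
        (AEvalLV_of_AEval h₂ fun _ h => hv (Or.inr h))
  | not b t _ ih => exact .not _ _ (ih hv)
  | and b₁ b₂ t₁ t₂ _ _ ih₁ ih₂ =>
      exact .and _ _ _ _ (ih₁ fun _ h => hv (Or.inl h)) (ih₂ fun _ h => hv (Or.inr h))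
  | or b₁ b₂ t₁ t₂ _ _ ih₁ ih₂ =>
      exact .or _ _ _ _ (ih₁ fun _ h => hv (Or.inl h)) (ih₂ fun _ h => hv (Or.inr h))

theorem before_subset_after {P : Program V L} (A : LVAnalysis P) {l g : L} {c : Cmd V L}
    (hc : P.cmds l = some c) (hne : c ≠ Cmd.done) (hg : g ∈ P.succs l) :
    A.before g ⊆ A.after l := by
  rw [A.after_eq l c hc hne]
  exact Set.subset_biUnion_of_mem hg

/-- (Live variables, Progress) If `⟨l,σ⟩ → ⟨l',σ'⟩` in the standard semantics, then
`⟨l, σ, β_before(l)⟩ ⇒ ⟨l', σ', β_before(l')⟩` in the live-variables augmented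
semantics. -/
theorem lv_progress (P : Program V L) (A : LVAnalysis P) (l l' : L) (σ σ' : State V)
    (h : Step P l σ l' σ') :
    LVStep P l σ (A.before l) l' σ' (A.before l') := by
  cases h with
  | assign v e n hc he =>
      have hb := A.before_eq l _ hc
      have hsub : A.before (P.next l) ⊆ A.after l :=
        before_subset_after A hc (by simp) (by simp [Program.succs, hc])
      refine LVStep.assign l σ _ v e n _ hc
        (AEvalLV_of_AEval he ?_) ?_
      · rw [hb]; exact fun x hx => Or.inr hx
      · intro x hx
        rcases hsub hx with hx'
        by_cases hxv : x = v
        · exact Or.inr hxv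
        · left; rw [hb]; exact Or.inl ⟨hx', hxv⟩
  | ifTrue b g hc he =>
      have hb := A.before_eq l _ hc
      have hsub : A.before l' ⊆ A.after l :=
        before_subset_after A hc (by simp) (by simp [Program.succs, hc])
      refine LVStep.ifTrue l σ _ b l' _ hc (BEvalLV_of_BEval he ?_) ?_
      · rw [hb]; exact fun x hx => Or.inr hx
      · intro x hx; rw [hb]; exact Or.inl (hsub hx)
  | ifFalse b g hc he =>
      have hb := A.before_eq l _ hc
      have hsub : A.before (P.next l) ⊆ A.after l :=
        before_subset_after A hc (by simp) (by simp [Program.succs, hc])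
      refine LVStep.ifFalse l σ _ b g _ hc (BEvalLV_of_BEval he ?_) ?_
      · rw [hb]; exact fun x hx => Or.inr hx
      · intro x hx; rw [hb]; exact Or.inl (hsub hx)
  | goto g hc =>
      have hb := A.before_eq l _ hc
      have ha := A.after_eq l _ hc (by simp)
      have : A.before l = A.before l' := by
        rw [hb, ha]; simp [Program.succs, hc, lvTransfer]
      rw [this] at *
      exact LVStep.goto l σ _ l' hc
  | skip hc =>
      have hb := A.before_eq l _ hc
      have ha := A.after_eq l _ hc (by simp)
      have : A.before l = A.before (P.next l) := by
        rw [hb, ha]; simp [Program.succs, hc, lvTransfer]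
      rw [this] at *
      exact LVStep.skip l σ _ hc
  | halt hc =>
      have hb := A.before_eq l _ hc
      have ha := A.after_eq l _ hc (by simp)
      have hempty := A.halt_after l hc
      have : A.before l = A.before (P.next l) := by
        rw [hb, ha]; simp [Program.succs, hc, lvTransfer]
      rw [this] at *
      exact LVStep.halt l σ _ hc

end Dataflow
end

section
/- (Very busy expressions, Progress) For every program P and very-busy-expressions analysis result β_before, β_after: if ⟨l,σ⟩ → ⟨l',σ'⟩ in the standard semantics, then ⟨l, σ, β_before(l)⟩ ⇒ ⟨l', σ', β_before(l')⟩ in the very-busy-expressions augmented semantics. -/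
namespace Dataflow

variable {V L : Type*}

variable [DecidableEq V]

/-- (Very busy expressions, Progress) If `⟨l,σ⟩ → ⟨l',σ'⟩` in the standard semantics,
then `⟨l, σ, β_before(l)⟩ ⇒ ⟨l', σ', β_before(l')⟩` in the very-busy-expressions
augmented semantics. -/
theorem vbe_progress (P : Program V L) (A : VBEAnalysis P) (l l' : L) (σ σ' : State V)
    (h : Step P l σ l' σ') :
    VBEStep P l σ (A.before l) l' σ' (A.before l') := by
  have hafter : ∀ c, P.cmds l = some c → c ≠ Cmd.done → ∀ g ∈ P.succs l,
      A.after l ⊆ A.before g := by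
    intro c hc hne g hg
    rw [A.after_eq l c hc hne]
    exact Set.biInter_subset_of_mem hg
  cases h with
  | assign v e n hc he =>
    have hb := A.before_eq l _ hc
    have hsucc : P.next l ∈ P.succs l := by simp [Program.succs, hc]
    have h2 := hafter _ hc (by simp) _ hsucc
    refine VBEStep.assign l σ _ v e n _ hc he ?_ ?_
    · intro e' he'
      rw [hb] at he'
      rcases he' with ⟨h1, hh⟩ | h1
      · right; intro hv; exact hh ⟨h1, hv⟩
      · left; exact h1
    · rintro e' ⟨he1, he2⟩
      rw [hb] at he1
      apply h2
      rcases he1 with ⟨h1, _⟩ | h1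
      · exact h1
      · exact absurd h1 he2
  | ifTrue b g hc he =>
    have hb := A.before_eq l _ hc
    have hsucc : l' ∈ P.succs l := by simp [Program.succs, hc]
    have h2 := hafter _ hc (by simp) _ hsucc
    refine VBEStep.ifTrue l σ _ b l' _ hc he ?_
    rintro e' ⟨he1, he2⟩
    rw [hb] at he1
    rcases he1 with h1 | h1
    · exact h2 h1
    · exact absurd h1 he2
  | ifFalse b g hc he =>
    have hb := A.before_eq l _ hc
    have hsucc : P.next l ∈ P.succs l := by simp [Program.succs, hc]
    have h2 := hafter _ hc (by simp) _ hsucc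
    refine VBEStep.ifFalse l σ _ b g _ hc he ?_
    rintro e' ⟨he1, he2⟩
    rw [hb] at he1
    rcases he1 with h1 | h1
    · exact h2 h1
    · exact absurd h1 he2
  | goto g hc =>
    have hb := A.before_eq l _ hc
    have hsucc : l' ∈ P.succs l := by simp [Program.succs, hc]
    have heq : A.before l = A.before l' := by
      rw [hb]
      show A.after l = _
      rw [A.after_eq l _ hc (by simp), Program.succs, hc]
      simp
    rw [heq] at *
    exact VBEStep.goto l σ _ l' hc
  | skip hc =>
    have hb := A.before_eq l _ hc
    have heq : A.before l = A.before (P.next l) := by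
      rw [hb]
      show A.after l = _
      rw [A.after_eq l _ hc (by simp), Program.succs, hc]
      simp
    rw [heq]
    exact VBEStep.skip l σ _ hc
  | halt hc =>
    have hdone := P.halt_done l hc
    have hnextb : A.before (P.next l) = ∅ := by
      rw [A.before_eq _ _ hdone]
      show A.after (P.next l) = ∅
      exact A.done_after _ hdone
    have heq : A.before l = A.before (P.next l) := by
      rw [A.before_eq l _ hc]
      show A.after l = _
      rw [A.after_eq l _ hc (by simp), Program.succs, hc]
      simp
    rw [heq]
    exact VBEStep.halt l σ _ hc hnextb

end Dataflow
end

section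
/- (Very busy expressions correctness, assignment) For every program P and very-busy-expressions analysis result β_before, β_after: if ⟨l_i, σ_i⟩ → ⋯ → ⟨l_j, σ_j⟩ is a sequence of standard steps, l_j : v := e ∈ P, e' ∈ β_before(l_i), and v ∈ vars(e'), then there exists k with i ≤ k ≤ j such that e' ∈ subexp(c) where l_k : c ∈ P. -/
namespace Dataflow

variable {V L : Type*}

variable [DecidableEq V]

lemma vbe_step_before {P : Program V L} (A : VBEAnalysis P)
    {l : L} {σ : State V} {l' : L} {σ' : State V}
    (h : Step P l σ l' σ') (e' : AExp V) (he : e' ∈ A.before l) :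
    (∃ c, P.cmds l = some c ∧ e' ∈ Cmd.subexp c) ∨ e' ∈ A.before l' := by
  cases h with
  | assign v0 e0 n h1 _ =>
    have hb := A.before_eq l _ h1
    rw [hb] at he
    rcases he with he | he
    · right
      have ha := A.after_eq l _ h1 (by simp)
      have hs : P.succs l = {P.next l} := by simp [Program.succs, h1]
      rw [ha, hs] at he
      simpa using he.1
    · exact Or.inl ⟨_, h1, he⟩
  | ifTrue b _ h1 _ =>
    have hb := A.before_eq l _ h1
    rw [hb] at he
    rcases he with he | he
    · right
      have ha := A.after_eq l _ h1 (by simp)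
      have hs : P.succs l = {P.next l, l'} := by simp [Program.succs, h1]
      rw [ha, hs] at he
      exact Set.mem_iInter₂.mp he l' (by simp)
    · exact Or.inl ⟨_, h1, he⟩
  | ifFalse b g h1 _ =>
    have hb := A.before_eq l _ h1
    rw [hb] at he
    rcases he with he | he
    · right
      have ha := A.after_eq l _ h1 (by simp)
      have hs : P.succs l = {P.next l, g} := by simp [Program.succs, h1]
      rw [ha, hs] at he
      exact Set.mem_iInter₂.mp he (P.next l) (by simp)
    · exact Or.inl ⟨_, h1, he⟩
  | goto _ h1 =>
    right
    have hb := A.before_eq l _ h1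
    rw [hb] at he
    have ha := A.after_eq l _ h1 (by simp)
    have hs : P.succs l = {l'} := by simp [Program.succs, h1]
    simp only [vbeTransfer] at he
    rw [ha, hs] at he
    simpa using he
  | skip h1 =>
    right
    have hb := A.before_eq l _ h1
    rw [hb] at he
    have ha := A.after_eq l _ h1 (by simp)
    have hs : P.succs l = {P.next l} := by simp [Program.succs, h1]
    simp only [vbeTransfer] at he
    rw [ha, hs] at he
    simpa using he
  | halt h1 =>
    right
    have hb := A.before_eq l _ h1
    rw [hb] at he
    have ha := A.after_eq l _ h1 (by simp)
    have hs : P.succs l = {P.next l} := by simp [Program.succs, h1]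
    simp only [vbeTransfer] at he
    rw [ha, hs] at he
    simpa using he

/-- (Very busy expressions correctness, assignment) If `⟨l_i, σ_i⟩ → ⋯ → ⟨l_j, σ_j⟩`
is a sequence of standard steps, `l_j : v := e ∈ P`, `e' ∈ β_before(l_i)`, and
`v ∈ vars(e')`, then there is `i ≤ k ≤ j` with `e' ∈ subexp(c)` where `l_k : c ∈ P`. -/
theorem vbe_correctness_assign (P : Program V L) (A : VBEAnalysis P)
    (ls : ℕ → L) (σs : ℕ → State V) (i j : ℕ) (hij : i ≤ j)
    (hsteps : ∀ k, i ≤ k → k < j → Step P (ls k) (σs k) (ls (k + 1)) (σs (k + 1)))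
    (v : V) (e : AExp V) (hj : P.cmds (ls j) = some (Cmd.assign v e))
    (e' : AExp V) (he' : e' ∈ A.before (ls i)) (hv : v ∈ e'.vars) :
    ∃ k, i ≤ k ∧ k ≤ j ∧ ∃ c, P.cmds (ls k) = some c ∧ e' ∈ Cmd.subexp c := by
  induction' hd : j - i with n ih generalizing i
  · 
    have : i = j := by omega
    subst this
    refine ⟨i, le_rfl, le_rfl, Cmd.assign v e, hj, ?_⟩
    have hb := A.before_eq _ _ hj
    rw [hb] at he'
    rcases he' with he' | he'
    · exact absurd ⟨he'.1, hv⟩ he'.2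
    · exact he'
  · 
    have hij' : i < j := by omega
    have hstep := hsteps i le_rfl hij'
    rcases vbe_step_before A hstep e' he' with ⟨c, hc, hec⟩ | he2
    · exact ⟨i, le_rfl, le_of_lt hij', c, hc, hec⟩
    · obtain ⟨k, hk1, hk2, hres⟩ := ih (i + 1) (by omega)
        (fun k h1 h2 => hsteps k (by omega) h2) he2 (by omega)
      exact ⟨k, by omega, hk2, hres⟩

end Dataflow
end

section
/- (Very busy expressions correctness, halting) For every program P and very-busy-expressions analysis result β_before, β_after: if ⟨l_i, σ_i⟩ → ⋯ → ⟨l_j, σ_j⟩ is a sequence of standard steps, e' ∈ β_before(l_i), and l_j : done ∈ P, then there exists k with i ≤ k < j such that e' ∈ subexp(c) where l_k : c ∈ P. -/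
namespace Dataflow

variable {V L : Type*}

variable [DecidableEq V]

lemma step_cmd {P : Program V L} {l σ l' σ'} (h : Step P l σ l' σ') :
    ∃ c, P.cmds l = some c := by
  cases h <;> exact ⟨_, by assumption⟩

lemma vbe_step_preserve (P : Program V L) (A : VBEAnalysis P) {l : L} {σ : State V} {l' σ'}
    (h : Step P l σ l' σ') (e' : AExp V) (he : e' ∈ A.before l)
    (hn : ∀ c, P.cmds l = some c → e' ∉ Cmd.subexp c) : e' ∈ A.before l' := by
  cases h with
  | assign v e n hc hev =>
    have hb := A.before_eq l _ hc
    have ha := A.after_eq l _ hc (by simp)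
    have hnot := hn _ hc
    rw [hb] at he
    simp only [vbeTransfer, Cmd.subexp] at he hnot
    have hafter : e' ∈ A.after l := by
      rcases he with h1 | h1
      · exact h1.1
      · exact absurd h1 hnot
    rw [ha] at hafter
    simp only [Program.succs, hc, Set.mem_iInter, Set.mem_singleton_iff] at hafter
    exact hafter _ rfl
  | ifTrue b g hc hev =>
    have hb := A.before_eq l _ hc
    have ha := A.after_eq l _ hc (by simp)
    have hnot := hn _ hc
    rw [hb] at he
    simp only [vbeTransfer, Cmd.subexp] at he hnot
    have hafter : e' ∈ A.after l := he.resolve_right hnot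
    rw [ha] at hafter
    simp only [Program.succs, hc, Set.mem_iInter, Set.mem_insert_iff,
      Set.mem_singleton_iff] at hafter
    exact hafter _ (Or.inr rfl)
  | ifFalse b g hc hev =>
    have hb := A.before_eq l _ hc
    have ha := A.after_eq l _ hc (by simp)
    have hnot := hn _ hc
    rw [hb] at he
    simp only [vbeTransfer, Cmd.subexp] at he hnot
    have hafter : e' ∈ A.after l := he.resolve_right hnot
    rw [ha] at hafter
    simp only [Program.succs, hc, Set.mem_iInter, Set.mem_insert_iff,
      Set.mem_singleton_iff] at hafter
    exact hafter _ (Or.inl rfl)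
  | goto g hc =>
    have hb := A.before_eq l _ hc
    have ha := A.after_eq l _ hc (by simp)
    rw [hb] at he
    simp only [vbeTransfer] at he
    rw [ha] at he
    simp only [Program.succs, hc, Set.mem_iInter, Set.mem_singleton_iff] at he
    exact he _ rfl
  | skip hc =>
    have hb := A.before_eq l _ hc
    have ha := A.after_eq l _ hc (by simp)
    rw [hb] at he
    simp only [vbeTransfer] at he
    rw [ha] at he
    simp only [Program.succs, hc, Set.mem_iInter, Set.mem_singleton_iff] at he
    exact he _ rfl
  | halt hc =>
    have hb := A.before_eq l _ hc
    have ha := A.after_eq l _ hc (by simp)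
    rw [hb] at he
    simp only [vbeTransfer] at he
    rw [ha] at he
    simp only [Program.succs, hc, Set.mem_iInter, Set.mem_singleton_iff] at he
    exact he _ rfl

/-- (Very busy expressions correctness, halting) If `⟨l_i, σ_i⟩ → ⋯ → ⟨l_j, σ_j⟩` is a
sequence of standard steps, `e' ∈ β_before(l_i)`, and `l_j : done ∈ P`, then there is
`i ≤ k < j` with `e' ∈ subexp(c)` where `l_k : c ∈ P`. -/
theorem vbe_correctness_halt (P : Program V L) (A : VBEAnalysis P)
    (ls : ℕ → L) (σs : ℕ → State V) (i j : ℕ) (hij : i ≤ j)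
    (hsteps : ∀ k, i ≤ k → k < j → Step P (ls k) (σs k) (ls (k + 1)) (σs (k + 1)))
    (e' : AExp V) (he' : e' ∈ A.before (ls i))
    (hj : P.cmds (ls j) = some Cmd.done) :
    ∃ k, i ≤ k ∧ k < j ∧ ∃ c, P.cmds (ls k) = some c ∧ e' ∈ Cmd.subexp c := by
  obtain ⟨n, hn⟩ : ∃ n, j = i + n := ⟨j - i, (Nat.add_sub_cancel' hij).symm⟩
  clear hij
  induction n generalizing i with
  | zero =>
    exfalso
    have hb := A.before_eq (ls j) _ hj
    rw [A.done_after _ hj] at hb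
    simp only [vbeTransfer] at hb
    have : i = j := by omega
    rw [this, hb] at he'
    exact he'
  | succ n ih =>
    have hstep := hsteps i (le_refl i) (by omega)
    obtain ⟨c, hc⟩ := step_cmd hstep
    by_cases hsub : e' ∈ Cmd.subexp c
    · exact ⟨i, le_refl i, by omega, c, hc, hsub⟩
    · have hnext : e' ∈ A.before (ls (i + 1)) := by
        refine vbe_step_preserve P A hstep e' he' ?_
        intro c' hc'
        rw [hc] at hc'
        exact (Option.some_injective _ hc') ▸ hsub
      obtain ⟨k, hk1, hk2, hres⟩ :=
        ih (i + 1) (fun k hk1 hk2 => hsteps k (by omega) hk2) hnext (by omega)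
      exact ⟨k, by omega, hk2, hres⟩

end Dataflow
end

section
/- (Defined variables, history invariant) For every program P: if ⟨l₀, σ₀, π₀⟩ ⇒ ⋯ ⇒ ⟨l_i, σ_i, π_i⟩ is a sequence of steps of the defined-variables augmented semantics with π₀ = ∅, then π_i ⊆ dom(σ_i). -/
namespace Dataflow

variable {V L : Type*}

variable [DecidableEq V]

theorem dv_step_invariant {P : Program V L} {l σ π l' σ' π'}
    (h : DVStep P l σ π l' σ' π') (hk : π ⊆ dom σ) : π' ⊆ dom σ' := by
  cases h with
  | assign v e n _ hc he hsub =>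
    intro x hx
    rcases hsub hx with h | h
    · have := hk h
      simp only [dom, Set.mem_setOf_eq, Function.update] at *
      split <;> simp_all
    · simp only [Set.mem_singleton_iff] at h
      subst h
      simp [dom, Function.update]
  | ifTrue b g _ hc he hsub => exact hsub.trans hk
  | ifFalse b g _ hc he hsub => exact hsub.trans hk
  | goto g _ hc hsub => exact hsub.trans hk
  | skip _ hc hsub => exact hsub.trans hk
  | halt _ hc hsub => exact hsub.trans hk

/-- (Defined variables, history invariant) If `⟨l₀, σ₀, π₀⟩ ⇒ ⋯ ⇒ ⟨l_i, σ_i, π_i⟩` is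
a sequence of steps of the defined-variables augmented semantics with `π₀ = ∅`, then
`π_i ⊆ dom(σ_i)`. -/
theorem dv_history_invariant (P : Program V L)
    (ls : ℕ → L) (σs : ℕ → State V) (πs : ℕ → Set V) (i : ℕ)
    (h0 : πs 0 = ∅)
    (hsteps : ∀ k, k < i →
      DVStep P (ls k) (σs k) (πs k) (ls (k + 1)) (σs (k + 1)) (πs (k + 1))) :
    πs i ⊆ dom (σs i) := by
  induction i with
  | zero => simp [h0]
  | succ k ih =>
    have hk : πs k ⊆ dom (σs k) := ih (fun j hj => hsteps j (hj.trans (Nat.lt_succ_self k)))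
    exact dv_step_invariant (hsteps k (Nat.lt_succ_self k)) hk

end Dataflow
end
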